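/- arXiv:1808.05568 — 3 statements merged into one kernel-verified Lean document; each statement's English description precedes it below -/
import Mathlib

section
/- Let ε ∈ {1,−1}, let u, v : ℝ → ℂ satisfy ε|u(x)|² + |v(x)|² = 1 for all x, let c : ℝ → ℝ, and set J′ = diag(1, −2, 1), g(x) = (1/√2)·[[1, 0, −1], [εu(x)*, √2·v(x), εu(x)*], [v(x)*, −√2·u(x), v(x)*]] and ψ₀(x) = exp(−i·c(x)·J′)·g(x)⁻¹. Then for all x: K·ψ₀(x) = ψ₀(x)·H and ψ₀(x)⁻¹·K = H·ψ₀(x)⁻¹, where K is the 3×3 matrix with 1's on the antidiagonal and 0 elsewhere and H = diag(−1, 1, 1). -/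
open Matrix

/-!
`K` swaps the first and last columns under right multiplication, and `H` negates the first row
under left multiplication. The first row of `g` is antisymmetric and the other two rows are
symmetric under that swap, so `g * K = H * g`; and `K` commutes with the diagonal `J'` because
its first and last entries agree, hence with `exp (-i c J')`. Thus `ψ₀ = exp (-i c J') * g⁻¹`
satisfies `ψ₀ * H = K * ψ₀`, and inverting this relation gives `ψ₀⁻¹ * K = H * ψ₀⁻¹`.
-/

theorem SemiconjBy.ringInverse_symm_left {M₀ : Type*} [MonoidWithZero M₀] {a x y : M₀}
    (h : SemiconjBy a x y) : SemiconjBy (Ring.inverse a) y x := by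
  by_cases ha : IsUnit a
  · obtain ⟨u, rfl⟩ := ha
    rw [Ring.inverse_unit]
    exact h.units_inv_symm_left
  · rw [Ring.inverse_non_unit a ha]
    exact SemiconjBy.zero_left y x

theorem Matrix.semiconjBy_nonsing_inv_symm_left {n R : Type*} [Fintype n] [DecidableEq n]
    [CommRing R] {A X Y : Matrix n n R} (h : SemiconjBy A X Y) : SemiconjBy A⁻¹ Y X := by
  rw [nonsing_inv_eq_ringInverse]
  exact h.ringInverse_symm_left

theorem Matrix.commute_antidiag_diagonal_fin_three {R : Type*} [Semiring R] (d : Fin 3 → R)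
    (h : d 0 = d 2) : Commute !![0, 0, 1; 0, 1, 0; 1, 0, 0] (diagonal d) := by
  ext i j
  fin_cases i <;> fin_cases j <;> simp [mul_apply, Fin.sum_univ_succ, h]

theorem Matrix.semiconjBy_fin_three_antidiag_diagonal {R : Type*} [Ring R] (a p q r s : R) :
    SemiconjBy !![a, 0, -a; p, q, p; r, s, r] !![0, 0, 1; 0, 1, 0; 1, 0, 0]
      (diagonal ![-1, 1, 1]) := by
  ext i j
  fin_cases i <;> fin_cases j <;> simp [mul_apply, Fin.sum_univ_succ]

theorem psi0_K_symmetry_general (ε : ℝ) (u v : ℝ → ℂ)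
    (c : ℝ → ℝ) :
    let J' : Matrix (Fin 3) (Fin 3) ℂ := Matrix.diagonal ![1, -2, 1]
    let g : ℝ → Matrix (Fin 3) (Fin 3) ℂ := fun x =>
      ((Real.sqrt 2 : ℂ))⁻¹ •
        !![1, 0, -1;
           (ε : ℂ) * (starRingEnd ℂ) (u x), (Real.sqrt 2 : ℂ) * v x,
             (ε : ℂ) * (starRingEnd ℂ) (u x);
           (starRingEnd ℂ) (v x), -(Real.sqrt 2 : ℂ) * u x, (starRingEnd ℂ) (v x)]
    let ψ₀ : ℝ → Matrix (Fin 3) (Fin 3) ℂ := fun x =>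
      NormedSpace.exp ((-(Complex.I * (c x : ℂ))) • J') * (g x)⁻¹
    let K : Matrix (Fin 3) (Fin 3) ℂ := !![0, 0, 1; 0, 1, 0; 1, 0, 0]
    let H : Matrix (Fin 3) (Fin 3) ℂ := Matrix.diagonal ![-1, 1, 1]
    ∀ x, K * ψ₀ x = ψ₀ x * H ∧ (ψ₀ x)⁻¹ * K = H * (ψ₀ x)⁻¹ := by
  intro J' g ψ₀ K H x
  have hg : SemiconjBy (g x) K H :=
    (semiconjBy_fin_three_antidiag_diagonal _ _ _ _ _).smul_left _
  have hJ' : Commute K J' := commute_antidiag_diagonal_fin_three _ rfl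
  have hψ₀ : SemiconjBy (ψ₀ x) H K :=
    SemiconjBy.mul_left (hJ'.symm.smul_left _).exp_left (semiconjBy_nonsing_inv_symm_left hg)
  exact ⟨hψ₀.eq.symm, (semiconjBy_nonsing_inv_symm_left hψ₀).eq⟩

theorem psi0_K_symmetry (ε : ℝ) (hε : ε = 1 ∨ ε = -1) (u v : ℝ → ℂ)
    (huv : ∀ x, ε * Complex.normSq (u x) + Complex.normSq (v x) = 1)
    (c : ℝ → ℝ) :
    let J' : Matrix (Fin 3) (Fin 3) ℂ := Matrix.diagonal ![1, -2, 1]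
    let g : ℝ → Matrix (Fin 3) (Fin 3) ℂ := fun x =>
      ((Real.sqrt 2 : ℂ))⁻¹ •
        !![1, 0, -1;
           (ε : ℂ) * (starRingEnd ℂ) (u x), (Real.sqrt 2 : ℂ) * v x,
             (ε : ℂ) * (starRingEnd ℂ) (u x);
           (starRingEnd ℂ) (v x), -(Real.sqrt 2 : ℂ) * u x, (starRingEnd ℂ) (v x)]
    let ψ₀ : ℝ → Matrix (Fin 3) (Fin 3) ℂ := fun x =>
      NormedSpace.exp ((-(Complex.I * (c x : ℂ))) • J') * (g x)⁻¹
    let K : Matrix (Fin 3) (Fin 3) ℂ := !![0, 0, 1; 0, 1, 0; 1, 0, 0]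
    let H : Matrix (Fin 3) (Fin 3) ℂ := Matrix.diagonal ![-1, 1, 1]
    ∀ x, K * ψ₀ x = ψ₀ x * H ∧ (ψ₀ x)⁻¹ * K = H * (ψ₀ x)⁻¹ :=
  psi0_K_symmetry_general ε u v c
end

section
/- Let ε ∈ {1,−1} and let S : ℝ → Mat(3,ℂ) satisfy Q_ε·S(x)†·Q_ε = S(x) for all x. Suppose ψ : ℝ × ℂ → Mat(3,ℂ) is such that for every μ ∈ ℂ the function x ↦ ψ(x,μ) is differentiable, ψ(x,μ) is invertible for all x, and i·∂ₓψ(x,μ) = μ·S(x)·ψ(x,μ). Fix λ ∈ ℂ and define φ(x) := (Q_ε · ψ(x, λ*)† · Q_ε)⁻¹. Then φ is differentiable and i·φ′(x) = λ·S(x)·φ(x); i.e., the reduction g₁ maps solutions of the pole-gauge linear problem at λ* to solutions at λ. -/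
/-!
Put `A(x) = Q ψ(x, λ*)† Q`, so that `φ = A⁻¹`. Taking the adjoint of `i ψ' = λ* S ψ` and
conjugating by `Q`, the relations `Q² = 1` and `Q S† Q = S` give `i A' = -λ A S`.
Differentiating `A⁻¹ A = 1` gives `φ' = -φ A' φ`, hence `i φ' = λ S φ`.
-/

open Matrix Complex

noncomputable section

open Filter Topology

variable {𝕜 𝕜' : Type*} [NontriviallyNormedField 𝕜] [NormedField 𝕜'] [NormedAlgebra 𝕜 𝕜']
  {l m n : Type*}

def HasMatrixDerivAt (A : 𝕜 → Matrix m n 𝕜') (A' : Matrix m n 𝕜') (x : 𝕜) : Prop :=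
  ∀ i j, HasDerivAt (fun t => A t i j) (A' i j) x

theorem hasMatrixDerivAt_const (C : Matrix m n 𝕜') (x : 𝕜) :
    HasMatrixDerivAt (fun _ => C) 0 x :=
  fun i j => hasDerivAt_const x (C i j)

namespace HasMatrixDerivAt

variable {x : 𝕜}

theorem unique {A : 𝕜 → Matrix m n 𝕜'} {A₁' A₂' : Matrix m n 𝕜'} (h₁ : HasMatrixDerivAt A A₁' x)
    (h₂ : HasMatrixDerivAt A A₂' x) : A₁' = A₂' :=
  Matrix.ext fun i j => (h₁ i j).unique (h₂ i j)

theorem congr_of_eventuallyEq {A B : 𝕜 → Matrix m n 𝕜'} {A' : Matrix m n 𝕜'}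
    (hA : HasMatrixDerivAt A A' x) (h : B =ᶠ[𝓝 x] A) : HasMatrixDerivAt B A' x :=
  fun i j => (hA i j).congr_of_eventuallyEq (h.mono fun _ ht => congrArg (fun M => M i j) ht)

theorem mul [Fintype m] {A : 𝕜 → Matrix l m 𝕜'} {B : 𝕜 → Matrix m n 𝕜'} {A' : Matrix l m 𝕜'}
    {B' : Matrix m n 𝕜'} (hA : HasMatrixDerivAt A A' x) (hB : HasMatrixDerivAt B B' x) :
    HasMatrixDerivAt (fun t => A t * B t) (A' * B x + A x * B') x := fun i j => by
  simp only [Matrix.add_apply, mul_apply, ← Finset.sum_add_distrib]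
  exact HasDerivAt.fun_sum fun k _ => (hA i k).fun_mul (hB k j)

theorem const_mul [Fintype m] {B : 𝕜 → Matrix m n 𝕜'} {B' : Matrix m n 𝕜'}
    (hB : HasMatrixDerivAt B B' x) (C : Matrix l m 𝕜') :
    HasMatrixDerivAt (fun t => C * B t) (C * B') x := by
  simpa using (hasMatrixDerivAt_const C x).mul hB

theorem mul_const [Fintype m] {A : 𝕜 → Matrix l m 𝕜'} {A' : Matrix l m 𝕜'}
    (hA : HasMatrixDerivAt A A' x) (C : Matrix m n 𝕜') :
    HasMatrixDerivAt (fun t => A t * C) (A' * C) x := by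
  simpa using hA.mul (hasMatrixDerivAt_const C x)

theorem conjTranspose [StarRing 𝕜] [TrivialStar 𝕜] [StarRing 𝕜'] [StarModule 𝕜 𝕜']
    [ContinuousStar 𝕜'] {A : 𝕜 → Matrix m n 𝕜'} {A' : Matrix m n 𝕜'}
    (hA : HasMatrixDerivAt A A' x) : HasMatrixDerivAt (fun t => (A t)ᴴ) A'ᴴ x :=
  fun i j => (hA j i).star

end HasMatrixDerivAt

section Inverse

variable [Fintype n] [DecidableEq n] {A : 𝕜 → Matrix n n 𝕜'} {x : 𝕜}

theorem DifferentiableAt.matrix_det (hA : ∀ i j, DifferentiableAt 𝕜 (fun t => A t i j) x) :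
    DifferentiableAt 𝕜 (fun t => (A t).det) x := by
  simp only [det_apply']
  exact DifferentiableAt.fun_sum fun σ _ =>
    (DifferentiableAt.fun_finsetProd fun i _ => hA (σ i) i).const_mul _

theorem DifferentiableAt.matrix_adjugate_apply
    (hA : ∀ i j, DifferentiableAt 𝕜 (fun t => A t i j) x) (i j : n) :
    DifferentiableAt 𝕜 (fun t => (A t).adjugate i j) x := by
  simp only [adjugate_apply]
  refine DifferentiableAt.matrix_det fun p q => ?_
  simp only [updateRow_apply]
  split_ifs
  · exact differentiableAt_const _
  · exact hA p q

theorem DifferentiableAt.matrix_inv_apply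
    (hA : ∀ i j, DifferentiableAt 𝕜 (fun t => A t i j) x) (hx : (A x).det ≠ 0) (i j : n) :
    DifferentiableAt 𝕜 (fun t => (A t)⁻¹ i j) x := by
  have hentry : (fun t => (A t)⁻¹ i j) = fun t => ((A t).det)⁻¹ * (A t).adjugate i j :=
    funext fun t => by rw [Matrix.inv_def, Matrix.smul_apply, Ring.inverse_eq_inv', smul_eq_mul]
  rw [hentry]
  exact ((DifferentiableAt.matrix_det hA).inv hx).mul (.matrix_adjugate_apply hA i j)

theorem HasMatrixDerivAt.inv {A' : Matrix n n 𝕜'} (hA : HasMatrixDerivAt A A' x)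
    (hx : IsUnit (A x).det) :
    HasMatrixDerivAt (fun t => (A t)⁻¹) (-((A x)⁻¹ * A' * (A x)⁻¹)) x := by
  have hdiff i j : DifferentiableAt 𝕜 (fun t => A t i j) x := (hA i j).differentiableAt
  set B' : Matrix n n 𝕜' := of fun i j => deriv (fun t => (A t)⁻¹ i j) x
  have hB : HasMatrixDerivAt (fun t => (A t)⁻¹) B' x := fun i j =>
    (DifferentiableAt.matrix_inv_apply hdiff hx.ne_zero i j).hasDerivAt
  have hinv_mul : (fun t => (A t)⁻¹ * A t) =ᶠ[𝓝 x] fun _ => 1 :=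
    ((DifferentiableAt.matrix_det hdiff).continuousAt.eventually_ne hx.ne_zero).mono fun t ht =>
      nonsing_inv_mul _ (isUnit_iff_ne_zero.mpr ht)
  have hsum : B' * A x + (A x)⁻¹ * A' = 0 :=
    (hB.mul hA).unique ((hasMatrixDerivAt_const 1 x).congr_of_eventuallyEq hinv_mul)
  have hB' : B' = -((A x)⁻¹ * A' * (A x)⁻¹) :=
    calc B' = (B' * A x + (A x)⁻¹ * A') * (A x)⁻¹ - (A x)⁻¹ * A' * (A x)⁻¹ := by
          rw [Matrix.add_mul, mul_nonsing_inv_cancel_right _ _ hx, add_sub_cancel_right]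
      _ = -((A x)⁻¹ * A' * (A x)⁻¹) := by rw [hsum, Matrix.zero_mul, zero_sub]
  exact hB' ▸ hB

end Inverse

section Reduction

variable [Fintype n] [DecidableEq n]

theorem diagonal_one_sign_one_mul_self {ε : ℝ} (hε : ε = 1 ∨ ε = -1) :
    diagonal ![1, (ε : ℂ), 1] * diagonal ![1, (ε : ℂ), 1] = 1 := by
  rw [diagonal_mul_diagonal, ← diagonal_one]
  congr 1
  funext i
  fin_cases i <;> rcases hε with rfl | rfl <;> norm_num

theorem I_smul_conjTranspose_sandwich {Q S P P' : Matrix n n ℂ} {μ : ℂ} (hQ : Q * Q = 1)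
    (hS : Q * Sᴴ * Q = S) (h : I • P' = starRingEnd ℂ μ • (S * P)) :
    I • (Q * P'ᴴ * Q) = -μ • (Q * Pᴴ * Q * S) := by
  have hP' : I • P'ᴴ = -μ • (Pᴴ * Sᴴ) := by
    have := congrArg (fun M => -(Mᴴ)) h
    simpa [conjTranspose_smul, conjTranspose_mul] using this
  calc I • (Q * P'ᴴ * Q) = Q * (I • P'ᴴ) * Q := by simp
    _ = -μ • (Q * Pᴴ * (Q * Q) * Sᴴ * Q) := by simp [hP', hQ, Matrix.mul_assoc]
    _ = -μ • (Q * Pᴴ * Q * (Q * Sᴴ * Q)) := by simp only [Matrix.mul_assoc]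
    _ = -μ • (Q * Pᴴ * Q * S) := by rw [hS]

theorem I_smul_neg_inv_mul_mul_inv {A A' S : Matrix n n ℂ} {μ : ℂ} (hA : IsUnit A.det)
    (h : I • A' = -μ • (A * S)) : I • -(A⁻¹ * A' * A⁻¹) = μ • (S * A⁻¹) := by
  calc I • -(A⁻¹ * A' * A⁻¹) = -(A⁻¹ * (I • A') * A⁻¹) := by simp
    _ = μ • (A⁻¹ * A * S * A⁻¹) := by simp [h, Matrix.mul_assoc]
    _ = μ • (S * A⁻¹) := by rw [nonsing_inv_mul _ hA, Matrix.one_mul]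

end Reduction

theorem reduction_g1_maps_solutions (ε : ℝ) (hε : ε = 1 ∨ ε = -1)
    (S : ℝ → Matrix (Fin 3) (Fin 3) ℂ)
    (hS : ∀ x, (Matrix.diagonal ![1, (ε : ℂ), 1]) * (S x)ᴴ * (Matrix.diagonal ![1, (ε : ℂ), 1])
      = S x)
    (ψ ψx : ℝ → ℂ → Matrix (Fin 3) (Fin 3) ℂ)
    (hinv : ∀ x μ, IsUnit (ψ x μ))
    (hd : ∀ (μ : ℂ) (x : ℝ) (i j : Fin 3), HasDerivAt (fun t => ψ t μ i j) (ψx x μ i j) x)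
    (heq : ∀ (μ : ℂ) (x : ℝ), Complex.I • ψx x μ = μ • (S x * ψ x μ))
    (lam : ℂ) :
    let Qε : Matrix (Fin 3) (Fin 3) ℂ := Matrix.diagonal ![1, (ε : ℂ), 1]
    let φ : ℝ → Matrix (Fin 3) (Fin 3) ℂ := fun x =>
      (Qε * (ψ x ((starRingEnd ℂ) lam))ᴴ * Qε)⁻¹
    ∃ φ' : ℝ → Matrix (Fin 3) (Fin 3) ℂ,
      (∀ x i j, HasDerivAt (fun t => φ t i j) (φ' x i j) x) ∧
      ∀ x, Complex.I • φ' x = lam • (S x * φ x) := by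
  intro Q φ
  set A : ℝ → Matrix (Fin 3) (Fin 3) ℂ := fun t => Q * (ψ t (starRingEnd ℂ lam))ᴴ * Q
  set A' : ℝ → Matrix (Fin 3) (Fin 3) ℂ := fun t => Q * (ψx t (starRingEnd ℂ lam))ᴴ * Q
  have hQ : Q * Q = 1 := diagonal_one_sign_one_mul_self hε
  have hA x : HasMatrixDerivAt A (A' x) x :=
    ((HasMatrixDerivAt.conjTranspose (hd _ x)).const_mul Q).mul_const Q
  have hAdet x : IsUnit (A x).det := by
    have hQu : IsUnit Q := IsUnit.of_mul_eq_one Q hQ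
    rw [← isUnit_iff_isUnit_det]
    exact (hQu.mul ((isUnit_conjTranspose _).mpr (hinv _ _))).mul hQu
  refine ⟨fun x => -((A x)⁻¹ * A' x * (A x)⁻¹), fun x => (hA x).inv (hAdet x), fun x => ?_⟩
  exact I_smul_neg_inv_mul_mul_inv (hAdet x) (I_smul_conjTranspose_sandwich hQ (hS x) (heq _ x))
end
end

section
/- Let V be a complex vector space, Λ and h linear operators on V with h ∘ h = id and Λ ∘ h = −h ∘ Λ, λ₀ ∈ ℂ with λ₀ ≠ 0, and A, B ∈ V with ΛA = λ₀·A, ΛB = λ₀·B + A. For s ∈ {0,1} set A^[s] = (1/2)(A + (−1)^s·h(A)), B^[s] = (1/2)(B + (−1)^s·h(B)), and V^[s] = span{A^[s], B^[s]}. Then: (i) if A^[s] ≠ 0, then A^[s] and B^[s] are linearly independent, V^[s] is two-dimensional, invariant under Λ², and the matrix of Λ² in the basis (2λ₀·A^[s], B^[s]) is the 2×2 Jordan block with λ₀² on the diagonal; (ii) if A^[s] = 0 and B^[s] ≠ 0, then V^[s] is one-dimensional and Λ²(B^[s]) = λ₀²·B^[s]; (iii) if A^[s] = B^[s] = 0 then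 V^[s] = 0. In all cases V^[s] is invariant under Λ² (though in case (i) with A^[s] ≠ 0 it need not be invariant under Λ). -/
/-!
Since `Λ` anticommutes with `h`, `Λ²` commutes with `h`, hence with the projections
`v ↦ ½ (v ± h v)`. These therefore carry the Jordan relations `Λ² A = λ₀² A`,
`Λ² B = λ₀² B + 2 λ₀ A` over to `A^[s]`, `B^[s]`. Applying `Λ² - λ₀²` to a vanishing
combination `x A^[s] + y B^[s]` leaves `2 λ₀ y A^[s]`, so `A^[s] ≠ 0` forces linear independence.
-/

open Module

section Field

variable {K V : Type*} [Field K] [AddCommGroup V] [Module K V]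

theorem linearIndependent_pair_of_jordan_chain (T : V →ₗ[K] V) {c d : K} {a b : V}
    (hd : d ≠ 0) (ha : a ≠ 0) (hTa : T a = c • a) (hTb : T b = c • b + d • a) :
    LinearIndependent K ![a, b] := by
  rw [LinearIndependent.pair_iff]
  intro x y hxy
  have hya : (y * d) • a = 0 := by
    have := congrArg (fun v => T v - c • v) hxy
    simp only [map_add, map_smul, hTa, hTb, map_zero, smul_zero, sub_zero] at this
    rw [← this]; module
  have hy : y = 0 := by simpa [hd, ha] using hya
  subst hy
  exact ⟨by simpa [ha] using hxy, rfl⟩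

theorem finrank_span_pair {a b : V} (hab : LinearIndependent K ![a, b]) :
    finrank K (Submodule.span K {a, b}) = 2 := by
  rw [← Matrix.range_cons_cons_empty a b ![], finrank_span_eq_card hab, Fintype.card_fin]

end Field

theorem Submodule.apply_mem_span_pair_of_jordan_chain {R M : Type*} [Semiring R]
    [AddCommMonoid M] [Module R M] (T : M →ₗ[R] M) {c d : R} {a b : M}
    (hTa : T a = c • a) (hTb : T b = c • b + d • a) :
    ∀ v ∈ span R {a, b}, T v ∈ span R {a, b} := by
  have ha : a ∈ span R {a, b} := subset_span (Set.mem_insert a {b})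
  have hb : b ∈ span R {a, b} := subset_span (Set.mem_insert_of_mem a rfl)
  have : span R {a, b} ≤ (span R {a, b}).comap T := by
    rw [span_le, Set.insert_subset_iff, Set.singleton_subset_iff]
    simp only [SetLike.mem_coe, mem_comap, hTa, hTb]
    exact ⟨smul_mem _ c ha, add_mem (smul_mem _ c hb) (smul_mem _ d ha)⟩
  exact fun v hv => this hv

section CommRing

variable {R M : Type*} [CommRing R] [AddCommGroup M] [Module R M]

theorem LinearMap.comp_self_apply_of_apply_eq_smul {Λ : M →ₗ[R] M} {μ : R} {A : M}
    (hA : Λ A = μ • A) : (Λ ∘ₗ Λ) A = μ ^ 2 • A := by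
  rw [comp_apply, hA, map_smul, hA, smul_smul, sq]

theorem LinearMap.comp_self_apply_of_apply_eq_smul_add {Λ : M →ₗ[R] M} {μ : R} {A B : M}
    (hA : Λ A = μ • A) (hB : Λ B = μ • B + A) :
    (Λ ∘ₗ Λ) B = μ ^ 2 • B + (2 * μ) • A := by
  rw [comp_apply, hB, map_add, map_smul, hB, hA]; module

theorem LinearMap.comp_self_apply_comm_of_comp_eq_neg {Λ h : M →ₗ[R] M}
    (hanti : Λ ∘ₗ h = -(h ∘ₗ Λ)) (x : M) : (Λ ∘ₗ Λ) (h x) = h ((Λ ∘ₗ Λ) x) := by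
  have hΛh (y : M) : Λ (h y) = -h (Λ y) := LinearMap.congr_fun hanti y
  rw [comp_apply, comp_apply, hΛh, map_neg, hΛh, neg_neg]

theorem map_smul_add_smul_apply_of_comm {T h : M →ₗ[R] M} (hTh : ∀ x, T (h x) = h (T x))
    (a b : R) (x : M) : T (a • (x + b • h x)) = a • (T x + b • h (T x)) := by
  rw [map_smul, map_add, map_smul, hTh]

end CommRing

theorem Lambda_sq_invariant_subspaces_discrete_spectrum_general
    (V : Type*) [AddCommGroup V] [Module ℂ V]
    (Λ h : V →ₗ[ℂ] V)
    (hanti : Λ ∘ₗ h = -(h ∘ₗ Λ))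
    (lam₀ : ℂ) (hlam₀ : lam₀ ≠ 0) (A B : V)
    (hA : Λ A = lam₀ • A) (hB : Λ B = lam₀ • B + A) :
    let As : ℕ → V := fun s => (2⁻¹ : ℂ) • (A + ((-1 : ℂ) ^ s) • h A)
    let Bs : ℕ → V := fun s => (2⁻¹ : ℂ) • (B + ((-1 : ℂ) ^ s) • h B)
    let Vs : ℕ → Submodule ℂ V := fun s => Submodule.span ℂ {As s, Bs s}
    ∀ s : ℕ,
      -- (i) if A^[s] ≠ 0
      (As s ≠ 0 →
        LinearIndependent ℂ ![As s, Bs s] ∧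
        Module.finrank ℂ (Vs s) = 2 ∧
        (∀ v ∈ Vs s, Λ (Λ v) ∈ Vs s) ∧
        -- matrix of Λ² in the basis (2λ₀·A^[s], B^[s]) is the Jordan block with λ₀²
        Λ (Λ ((2 * lam₀) • As s)) = (lam₀ ^ 2) • ((2 * lam₀) • As s) + (0 : ℂ) • Bs s ∧
        Λ (Λ (Bs s)) = (1 : ℂ) • ((2 * lam₀) • As s) + (lam₀ ^ 2) • Bs s) ∧
      -- (ii) if A^[s] = 0 and B^[s] ≠ 0
      (As s = 0 → Bs s ≠ 0 →
        Module.finrank ℂ (Vs s) = 1 ∧ Λ (Λ (Bs s)) = (lam₀ ^ 2) • Bs s) ∧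
      -- (iii) if A^[s] = B^[s] = 0
      (As s = 0 → Bs s = 0 → Vs s = ⊥) ∧
      -- in all cases V^[s] is invariant under Λ²
      (∀ v ∈ Vs s, Λ (Λ v) ∈ Vs s) := by
  intro As Bs Vs s
  have hcomm := LinearMap.comp_self_apply_comm_of_comp_eq_neg hanti
  have hAs : (Λ ∘ₗ Λ) (As s) = lam₀ ^ 2 • As s := by
    simp only [As, map_smul_add_smul_apply_of_comm hcomm,
      LinearMap.comp_self_apply_of_apply_eq_smul hA, map_smul]
    module
  have hBs : (Λ ∘ₗ Λ) (Bs s) = lam₀ ^ 2 • Bs s + (2 * lam₀) • As s := by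
    simp only [As, Bs, map_smul_add_smul_apply_of_comm hcomm,
      LinearMap.comp_self_apply_of_apply_eq_smul_add hA hB, map_add, map_smul]
    module
  have hinvariant : ∀ v ∈ Vs s, Λ (Λ v) ∈ Vs s :=
    Submodule.apply_mem_span_pair_of_jordan_chain _ hAs hBs
  rw [LinearMap.comp_apply] at hAs hBs
  refine ⟨fun hAs0 => ?_, fun hAs0 hBs0 => ?_, fun hAs0 hBs0 => ?_, hinvariant⟩
  · have hli := linearIndependent_pair_of_jordan_chain (Λ ∘ₗ Λ)
      (mul_ne_zero two_ne_zero hlam₀) hAs0 hAs hBs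
    refine ⟨hli, finrank_span_pair hli, hinvariant, ?_, ?_⟩
    · rw [map_smul, map_smul, hAs]
      module
    · rw [hBs]
      module
  · have hVs : Vs s = Submodule.span ℂ {Bs s} := by
      simp only [Vs, hAs0, Submodule.span_insert_zero]
    rw [hVs, finrank_span_singleton hBs0, hBs, hAs0, smul_zero, add_zero]
    exact ⟨rfl, rfl⟩
  · simp only [Vs, hAs0, hBs0, Set.pair_eq_singleton, Submodule.span_singleton_eq_bot]

theorem Lambda_sq_invariant_subspaces_discrete_spectrum
    (V : Type*) [AddCommGroup V] [Module ℂ V]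
    (Λ h : V →ₗ[ℂ] V)
    (hinv : h ∘ₗ h = LinearMap.id)
    (hanti : Λ ∘ₗ h = -(h ∘ₗ Λ))
    (lam₀ : ℂ) (hlam₀ : lam₀ ≠ 0) (A B : V)
    (hA : Λ A = lam₀ • A) (hB : Λ B = lam₀ • B + A) :
    let As : ℕ → V := fun s => (2⁻¹ : ℂ) • (A + ((-1 : ℂ) ^ s) • h A)
    let Bs : ℕ → V := fun s => (2⁻¹ : ℂ) • (B + ((-1 : ℂ) ^ s) • h B)
    let Vs : ℕ → Submodule ℂ V := fun s => Submodule.span ℂ {As s, Bs s}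
    ∀ s : ℕ,
      -- (i) if A^[s] ≠ 0
      (As s ≠ 0 →
        LinearIndependent ℂ ![As s, Bs s] ∧
        Module.finrank ℂ (Vs s) = 2 ∧
        (∀ v ∈ Vs s, Λ (Λ v) ∈ Vs s) ∧
        -- matrix of Λ² in the basis (2λ₀·A^[s], B^[s]) is the Jordan block with λ₀²
        Λ (Λ ((2 * lam₀) • As s)) = (lam₀ ^ 2) • ((2 * lam₀) • As s) + (0 : ℂ) • Bs s ∧
        Λ (Λ (Bs s)) = (1 : ℂ) • ((2 * lam₀) • As s) + (lam₀ ^ 2) • Bs s) ∧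
      -- (ii) if A^[s] = 0 and B^[s] ≠ 0
      (As s = 0 → Bs s ≠ 0 →
        Module.finrank ℂ (Vs s) = 1 ∧ Λ (Λ (Bs s)) = (lam₀ ^ 2) • Bs s) ∧
      -- (iii) if A^[s] = B^[s] = 0
      (As s = 0 → Bs s = 0 → Vs s = ⊥) ∧
      -- in all cases V^[s] is invariant under Λ²
      (∀ v ∈ Vs s, Λ (Λ v) ∈ Vs s) :=
  Lambda_sq_invariant_subspaces_discrete_spectrum_general V Λ h hanti lam₀ hlam₀ A B hA hB
end
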